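/- arXiv:2207.06280 — 2 statements merged into one kernel-verified Lean document; each statement's English description precedes it below -/
import Mathlib

section
/- Fix a commutative ring k and a rational function (or polynomial) K(x, y) in two variables over k. For each n ≥ 0 let A_n = k[s_1, …, s_n]^{S_n} be symmetric polynomials, and define for f ∈ A_{n1}, g ∈ A_{n2} the shuffle product (f * g)(s_1, …, s_{n1+n2}) = Σ_σ σ · ( f(s_1,…,s_{n1}) · g(s_{n1+1},…,s_{n1+n2}) · Π_{i ≤ n1 < j} K(s_i, s_j) ), where σ runs over the (n1, n2)-shuffle permutations in S_{n1+n2}. Then this product is associative: for f ∈ A_{n1}, g ∈ A_{n2}, h ∈ A_{n3}, one has (f * g) * h = f * (g * h), both being equal to the sum over (n1,n2,n3)-shuffles of σ · ( f · g · h · Π_{i ≤ n1 < j} K(s_i,s_j) · Π_{i ≤ n1+n2 < j, i ≤ n1} K(s_i,s_j) · Π_{n1 < i ≤ n1+n2 < j} K(s_i,s_j) ). -/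
open Equiv MvPolynomial

open scoped Classical

/-- An `(n1, n2)`-shuffle. -/
def IsShuffle (n1 n2 : ℕ) (σ : Equiv.Perm (Fin (n1 + n2))) : Prop :=
  StrictMono (fun i : Fin n1 => σ (Fin.castAdd n2 i)) ∧
  StrictMono (fun j : Fin n2 => σ (Fin.natAdd n1 j))

/-- An `(n1, n2, n3)`-shuffle. -/
def IsShuffle3 (n1 n2 n3 : ℕ) (σ : Equiv.Perm (Fin (n1 + n2 + n3))) : Prop :=
  StrictMono (fun i : Fin n1 => σ (Fin.castAdd n3 (Fin.castAdd n2 i))) ∧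
  StrictMono (fun j : Fin n2 => σ (Fin.castAdd n3 (Fin.natAdd n1 j))) ∧
  StrictMono (fun l : Fin n3 => σ (Fin.natAdd (n1 + n2) l))

variable {k : Type*} [CommRing k]

/-- The two-variable kernel `K(x,y)` evaluated at the variables `s_i`, `s_j`. -/
noncomputable def kernelAt (K : MvPolynomial (Fin 2) k) {n : ℕ} (i j : Fin n) :
    MvPolynomial (Fin n) k :=
  aeval ![(X i : MvPolynomial (Fin n) k), X j] K

/-- The shuffle product with kernel `K`:
`(f * g) = Σ_σ σ·( f(s_1,…,s_{n1}) g(s_{n1+1},…,s_{n1+n2}) Π_{i ≤ n1 < j} K(s_i, s_j) )`,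
where `σ` runs over `(n1, n2)`-shuffles. -/
noncomputable def shufMul (K : MvPolynomial (Fin 2) k) {n1 n2 : ℕ}
    (f : MvPolynomial (Fin n1) k) (g : MvPolynomial (Fin n2) k) :
    MvPolynomial (Fin (n1 + n2)) k :=
  ∑ σ : Equiv.Perm (Fin (n1 + n2)),
    if IsShuffle n1 n2 σ then
      rename (⇑σ) (rename (Fin.castAdd n2) f * rename (Fin.natAdd n1) g *
        ∏ i : Fin n1, ∏ j : Fin n2, kernelAt K (Fin.castAdd n2 i) (Fin.natAdd n1 j))
    else 0

/-- The triple shuffle product: the sum over `(n1,n2,n3)`-shuffles of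
`σ·( f g h · Π_{blocks 1×2} K · Π_{blocks 1×3} K · Π_{blocks 2×3} K )`. -/
noncomputable def shufMul3 (K : MvPolynomial (Fin 2) k) {n1 n2 n3 : ℕ}
    (f : MvPolynomial (Fin n1) k) (g : MvPolynomial (Fin n2) k)
    (h : MvPolynomial (Fin n3) k) : MvPolynomial (Fin (n1 + n2 + n3)) k :=
  ∑ σ : Equiv.Perm (Fin (n1 + n2 + n3)),
    if IsShuffle3 n1 n2 n3 σ then
      rename (⇑σ) (rename (fun i : Fin n1 => Fin.castAdd n3 (Fin.castAdd n2 i)) f *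
        rename (fun j : Fin n2 => Fin.castAdd n3 (Fin.natAdd n1 j)) g *
        rename (Fin.natAdd (n1 + n2)) h *
        (∏ i : Fin n1, ∏ j : Fin n2,
          kernelAt K (Fin.castAdd n3 (Fin.castAdd n2 i)) (Fin.castAdd n3 (Fin.natAdd n1 j))) *
        (∏ i : Fin n1, ∏ l : Fin n3,
          kernelAt K (Fin.castAdd n3 (Fin.castAdd n2 i)) (Fin.natAdd (n1 + n2) l)) *
        (∏ j : Fin n2, ∏ l : Fin n3,
          kernelAt K (Fin.castAdd n3 (Fin.natAdd n1 j)) (Fin.natAdd (n1 + n2) l)))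
    else 0

/-! Every permutation of `Fin (m + n)` factors uniquely as `σ * (τ ⊕ τ')` with `σ` an
`(m, n)`-shuffle: `σ` is the increasing bijection onto the images of the two blocks. The summand
`f(s_1,…,s_m) g(s_{m+1},…,s_{m+n}) ∏ K(s_i, s_j)` of the shuffle product turns the action of
`τ ⊕ τ'` into the action of `τ` on `f` and of `τ'` on `g`, because `τ ⊕ τ'` only permutes the
factors of the kernel product. Expanding `(f * g) * h` therefore gives a sum, over an
`(n1 + n2, n3)`-shuffle `σ` and an `(n1, n2)`-shuffle `τ`, of `σ * (τ ⊕ 1)` applied to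
`f g h ∏ K ∏ K ∏ K`. By the factorization, `σ * (τ ⊕ 1)` runs exactly once through the
`(n1, n2, n3)`-shuffles: such a shuffle is increasing on the last block, which forces the
second factor to be `τ ⊕ 1`, and on the first two blocks exactly when `τ` is a shuffle. The same
argument, on `Fin (n1 + (n2 + n3))`, applies to `f * (g * h)`. -/

open Finset

lemma StrictMono.strictMono_comp_iff {α β γ : Type*} [Preorder α] [LinearOrder β] [Preorder γ]
    {f : β → γ} (hf : StrictMono f) {g : α → β} : StrictMono (f ∘ g) ↔ StrictMono g :=
  ⟨fun h _ _ hab => hf.lt_iff_lt.mp (h hab), hf.comp⟩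

lemma Equiv.Perm.eq_one_of_strictMono {n : ℕ} {τ : Perm (Fin n)} (hτ : StrictMono τ) : τ = 1 :=
  DFunLike.coe_injective <| (hτ.range_inj strictMono_id).mp (by simp [τ.surjective.range_eq])

lemma StrictMono.strictMono_comp_perm_iff {n : ℕ} {α : Type*} [Preorder α] {f : Fin n → α}
    (hf : StrictMono f) (τ : Perm (Fin n)) : StrictMono (f ∘ τ) ↔ τ = 1 := by
  rw [hf.strictMono_comp_iff]
  exact ⟨Perm.eq_one_of_strictMono, fun h => h ▸ strictMono_id⟩

def blockPerm {m n : ℕ} (τ : Perm (Fin m)) (τ' : Perm (Fin n)) : Perm (Fin (m + n)) :=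
  finSumFinEquiv.permCongr (τ.sumCongr τ')

section BlockPerm

variable {m n : ℕ} (τ : Perm (Fin m)) (τ' : Perm (Fin n))

@[simp] lemma blockPerm_castAdd (i : Fin m) :
    blockPerm τ τ' (Fin.castAdd n i) = Fin.castAdd n (τ i) := by
  simp [blockPerm, permCongr_apply]

@[simp] lemma blockPerm_natAdd (j : Fin n) :
    blockPerm τ τ' (Fin.natAdd m j) = Fin.natAdd m (τ' j) := by
  simp [blockPerm, permCongr_apply]

lemma blockPerm_comp_castAdd : blockPerm τ τ' ∘ Fin.castAdd n = Fin.castAdd n ∘ τ :=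
  funext <| blockPerm_castAdd τ τ'

lemma blockPerm_comp_natAdd : blockPerm τ τ' ∘ Fin.natAdd m = Fin.natAdd m ∘ τ' :=
  funext <| blockPerm_natAdd τ τ'

lemma blockPerm_injective :
    Function.Injective fun p : Perm (Fin m) × Perm (Fin n) => blockPerm p.1 p.2 :=
  finSumFinEquiv.permCongr.injective.comp Perm.sumCongrHom_injective

lemma range_mul_blockPerm_comp_castAdd (σ : Perm (Fin (m + n))) :
    Set.range ((σ * blockPerm τ τ') ∘ Fin.castAdd n) = Set.range (σ ∘ Fin.castAdd n) := by
  rw [Perm.coe_mul, Function.comp_assoc, blockPerm_comp_castAdd, ← Function.comp_assoc,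
    τ.surjective.range_comp]

lemma range_mul_blockPerm_comp_natAdd (σ : Perm (Fin (m + n))) :
    Set.range ((σ * blockPerm τ τ') ∘ Fin.natAdd m) = Set.range (σ ∘ Fin.natAdd m) := by
  rw [Perm.coe_mul, Function.comp_assoc, blockPerm_comp_natAdd, ← Function.comp_assoc,
    τ'.surjective.range_comp]

end BlockPerm

section Shuffles

variable {m n : ℕ}

noncomputable def shuffles (m n : ℕ) : Finset (Perm (Fin (m + n))) := univ.filter (IsShuffle m n)

@[simp] lemma mem_shuffles {σ : Perm (Fin (m + n))} : σ ∈ shuffles m n ↔ IsShuffle m n σ := by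
  simp [shuffles]

lemma IsShuffle.ext {σ₁ σ₂ : Perm (Fin (m + n))} (h₁ : IsShuffle m n σ₁)
    (h₂ : IsShuffle m n σ₂)
    (hc : Set.range (σ₁ ∘ Fin.castAdd n) = Set.range (σ₂ ∘ Fin.castAdd n))
    (hn : Set.range (σ₁ ∘ Fin.natAdd m) = Set.range (σ₂ ∘ Fin.natAdd m)) : σ₁ = σ₂ :=
  Equiv.ext <| Fin.addCases (congrFun ((h₁.1.range_inj h₂.1).mp hc))
    (congrFun ((h₁.2.range_inj h₂.2).mp hn))

lemma exists_isShuffle_mul_blockPerm_eq (ρ : Perm (Fin (m + n))) :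
    ∃ σ, IsShuffle m n σ ∧ ∃ τ τ', σ * blockPerm τ τ' = ρ := by
  set A := univ.image (ρ ∘ Fin.castAdd n)
  have hA : #A = m := by
    rw [card_image_of_injective _ (ρ.injective.comp (Fin.castAdd_injective m n)), card_fin]
  have hAc : #Aᶜ = n := by rw [card_compl, hA, Fintype.card_fin]; omega
  let σ : Perm (Fin (m + n)) := finSumFinEquiv.symm.trans (finSumEquivOfFinset hA hAc)
  have hσc : σ ∘ Fin.castAdd n = A.orderEmbOfFin hA := funext fun i => by simp [σ]
  have hσn : σ ∘ Fin.natAdd m = Aᶜ.orderEmbOfFin hAc := funext fun j => by simp [σ]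
  have hσ : IsShuffle m n σ :=
    ⟨show StrictMono (σ ∘ Fin.castAdd n) from hσc ▸ (A.orderEmbOfFin hA).strictMono,
      show StrictMono (σ ∘ Fin.natAdd m) from hσn ▸ (Aᶜ.orderEmbOfFin hAc).strictMono⟩
  have hmaps : Set.MapsTo (finSumFinEquiv.symm.permCongr (σ⁻¹ * ρ)) (Set.range Sum.inl)
      (Set.range Sum.inl) := by
    rintro _ ⟨a, rfl⟩
    obtain ⟨i, hi⟩ : ρ (Fin.castAdd n a) ∈ Set.range (σ ∘ Fin.castAdd n) := by
      rw [hσc, range_orderEmbOfFin]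
      exact mem_image_of_mem _ (mem_univ a)
    exact ⟨i, by simp [permCongr_apply, ← hi]⟩
  obtain ⟨⟨τ, τ'⟩, hτ⟩ := Perm.mem_sumCongrHom_range_of_perm_mapsTo_inl hmaps
  refine ⟨σ, hσ, τ, τ', ?_⟩
  change σ * finSumFinEquiv.permCongr (Perm.sumCongrHom _ _ (τ, τ')) = ρ
  rw [hτ]
  ext x
  simp [permCongr_apply]

theorem sum_shuffles_sum_blockPerm {M : Type*} [AddCommMonoid M] (F : Perm (Fin (m + n)) → M) :
    ∑ σ ∈ shuffles m n, ∑ τ, ∑ τ', F (σ * blockPerm τ τ') = ∑ ρ, F ρ := by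
  simp_rw [← Fintype.sum_prod_type', ← sum_product' (shuffles m n) univ]
  refine sum_nbij (fun p => p.1 * blockPerm p.2.1 p.2.2) (fun _ _ => mem_univ _) ?_ ?_
    fun _ _ => rfl
  · rintro ⟨σ₁, τ₁, τ₁'⟩ h₁ ⟨σ₂, τ₂, τ₂'⟩ h₂ (he : σ₁ * _ = σ₂ * _)
    have hσ₁ := mem_shuffles.mp (mem_product.mp h₁).1
    have hσ₂ := mem_shuffles.mp (mem_product.mp h₂).1
    obtain rfl : σ₁ = σ₂ := hσ₁.ext hσ₂
      (by rw [← range_mul_blockPerm_comp_castAdd τ₁ τ₁', he, range_mul_blockPerm_comp_castAdd])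
      (by rw [← range_mul_blockPerm_comp_natAdd τ₁ τ₁', he, range_mul_blockPerm_comp_natAdd])
    obtain ⟨rfl, rfl⟩ := Prod.ext_iff.mp (blockPerm_injective (mul_left_cancel he))
    rfl
  · intro ρ _
    obtain ⟨σ, hσ, τ, τ', rfl⟩ := exists_isShuffle_mul_blockPerm_eq ρ
    exact ⟨(σ, τ, τ'), mem_product.mpr ⟨mem_shuffles.mpr hσ, mem_univ _⟩, rfl⟩

theorem sum_shuffles_sum_blockPerm_one_right {M : Type*} [AddCommMonoid M]
    (F : Perm (Fin (m + n)) → M) :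
    ∑ σ ∈ shuffles m n, ∑ τ, F (σ * blockPerm τ 1) =
      ∑ ρ : Perm (Fin (m + n)), if StrictMono (⇑ρ ∘ Fin.natAdd m) then F ρ else 0 := by
  rw [← sum_shuffles_sum_blockPerm]
  refine sum_congr rfl fun σ hσ => sum_congr rfl fun τ _ => ?_
  have hστ' (τ' : Perm (Fin n)) :
      StrictMono (⇑(σ * blockPerm τ τ') ∘ Fin.natAdd m) ↔ τ' = 1 := by
    rw [Perm.coe_mul, Function.comp_assoc, blockPerm_comp_natAdd, ← Function.comp_assoc]
    exact (mem_shuffles.mp hσ).2.strictMono_comp_perm_iff τ'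
  simp_rw [hστ', sum_ite_eq', mem_univ, if_true]

theorem sum_shuffles_sum_blockPerm_one_left {M : Type*} [AddCommMonoid M]
    (F : Perm (Fin (m + n)) → M) :
    ∑ σ ∈ shuffles m n, ∑ τ', F (σ * blockPerm 1 τ') =
      ∑ ρ : Perm (Fin (m + n)), if StrictMono (⇑ρ ∘ Fin.castAdd n) then F ρ else 0 := by
  rw [← sum_shuffles_sum_blockPerm, sum_congr rfl fun σ _ => sum_comm]
  refine sum_congr rfl fun σ hσ => sum_congr rfl fun τ' _ => ?_
  have hστ (τ : Perm (Fin m)) :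
      StrictMono (⇑(σ * blockPerm τ τ') ∘ Fin.castAdd n) ↔ τ = 1 := by
    rw [Perm.coe_mul, Function.comp_assoc, blockPerm_comp_castAdd, ← Function.comp_assoc]
    exact (mem_shuffles.mp hσ).1.strictMono_comp_perm_iff τ
  simp_rw [hστ, sum_ite_eq', mem_univ, if_true]

end Shuffles

def IsShuffle3' (n1 n2 n3 : ℕ) (ρ : Perm (Fin (n1 + (n2 + n3)))) : Prop :=
  StrictMono (fun i : Fin n1 => ρ (Fin.castAdd (n2 + n3) i)) ∧
  StrictMono (fun j : Fin n2 => ρ (Fin.natAdd n1 (Fin.castAdd n3 j))) ∧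
  StrictMono (fun l : Fin n3 => ρ (Fin.natAdd n1 (Fin.natAdd n2 l)))

section TripleShuffles

variable {n1 n2 n3 : ℕ}

lemma IsShuffle.isShuffle3_mul_blockPerm_iff {σ : Perm (Fin (n1 + n2 + n3))}
    (hσ : IsShuffle (n1 + n2) n3 σ) (τ : Perm (Fin (n1 + n2))) :
    IsShuffle3 n1 n2 n3 (σ * blockPerm τ 1) ↔ IsShuffle n1 n2 τ := by
  simp only [IsShuffle3, IsShuffle, Perm.mul_apply, blockPerm_castAdd, blockPerm_natAdd,
    Perm.one_apply]
  exact ⟨fun h => ⟨hσ.1.strictMono_comp_iff.mp h.1, hσ.1.strictMono_comp_iff.mp h.2.1⟩,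
    fun h => ⟨hσ.1.comp h.1, hσ.1.comp h.2, hσ.2⟩⟩

lemma IsShuffle.isShuffle3'_mul_blockPerm_iff {σ : Perm (Fin (n1 + (n2 + n3)))}
    (hσ : IsShuffle n1 (n2 + n3) σ) (τ : Perm (Fin (n2 + n3))) :
    IsShuffle3' n1 n2 n3 (σ * blockPerm 1 τ) ↔ IsShuffle n2 n3 τ := by
  simp only [IsShuffle3', IsShuffle, Perm.mul_apply, blockPerm_castAdd, blockPerm_natAdd,
    Perm.one_apply]
  exact ⟨fun h => ⟨hσ.2.strictMono_comp_iff.mp h.2.1, hσ.2.strictMono_comp_iff.mp h.2.2⟩,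
    fun h => ⟨hσ.1, hσ.2.comp h.1, hσ.2.comp h.2⟩⟩

theorem sum_shuffles_sum_shuffles_blockPerm_left {M : Type*} [AddCommMonoid M]
    (F : Perm (Fin (n1 + n2 + n3)) → M) :
    ∑ σ ∈ shuffles (n1 + n2) n3, ∑ τ ∈ shuffles n1 n2, F (σ * blockPerm τ 1) =
      ∑ ρ : Perm (Fin (n1 + n2 + n3)), if IsShuffle3 n1 n2 n3 ρ then F ρ else 0 := by
  calc _ = ∑ σ ∈ shuffles (n1 + n2) n3, ∑ τ,
        if IsShuffle3 n1 n2 n3 (σ * blockPerm τ 1) then F (σ * blockPerm τ 1) else 0 := by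
        refine sum_congr rfl fun σ hσ => ?_
        simp only [(mem_shuffles.mp hσ).isShuffle3_mul_blockPerm_iff, shuffles, sum_filter]
    _ = _ := by
        rw [sum_shuffles_sum_blockPerm_one_right fun ρ => if IsShuffle3 n1 n2 n3 ρ then F ρ else 0]
        refine sum_congr rfl fun ρ _ => ?_
        by_cases hρ : IsShuffle3 n1 n2 n3 ρ
        · simp [hρ, show StrictMono (⇑ρ ∘ Fin.natAdd (n1 + n2)) from hρ.2.2]
        · simp [hρ]

theorem sum_shuffles_sum_shuffles_blockPerm_right {M : Type*} [AddCommMonoid M]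
    (F : Perm (Fin (n1 + (n2 + n3))) → M) :
    ∑ σ ∈ shuffles n1 (n2 + n3), ∑ τ ∈ shuffles n2 n3, F (σ * blockPerm 1 τ) =
      ∑ ρ : Perm (Fin (n1 + (n2 + n3))), if IsShuffle3' n1 n2 n3 ρ then F ρ else 0 := by
  calc _ = ∑ σ ∈ shuffles n1 (n2 + n3), ∑ τ,
        if IsShuffle3' n1 n2 n3 (σ * blockPerm 1 τ) then F (σ * blockPerm 1 τ) else 0 := by
        refine sum_congr rfl fun σ hσ => ?_
        simp only [(mem_shuffles.mp hσ).isShuffle3'_mul_blockPerm_iff, shuffles, sum_filter]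
    _ = _ := by
        rw [sum_shuffles_sum_blockPerm_one_left fun ρ => if IsShuffle3' n1 n2 n3 ρ then F ρ else 0]
        refine sum_congr rfl fun ρ _ => ?_
        by_cases hρ : IsShuffle3' n1 n2 n3 ρ
        · simp [hρ, show StrictMono (⇑ρ ∘ Fin.castAdd (n2 + n3)) from hρ.1]
        · simp [hρ]

@[simp] lemma finCongr_add_assoc_castAdd_castAdd (i : Fin n1) :
    finCongr (Nat.add_assoc n1 n2 n3) (Fin.castAdd n3 (Fin.castAdd n2 i)) =
      Fin.castAdd (n2 + n3) i :=
  rfl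

@[simp] lemma finCongr_add_assoc_castAdd_natAdd (j : Fin n2) :
    finCongr (Nat.add_assoc n1 n2 n3) (Fin.castAdd n3 (Fin.natAdd n1 j)) =
      Fin.natAdd n1 (Fin.castAdd n3 j) :=
  rfl

@[simp] lemma finCongr_add_assoc_natAdd (l : Fin n3) :
    finCongr (Nat.add_assoc n1 n2 n3) (Fin.natAdd (n1 + n2) l) =
      Fin.natAdd n1 (Fin.natAdd n2 l) :=
  Fin.ext (Nat.add_assoc n1 n2 l)

lemma isShuffle3'_permCongr_iff (ρ : Perm (Fin (n1 + n2 + n3))) :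
    IsShuffle3' n1 n2 n3 ((finCongr (Nat.add_assoc n1 n2 n3)).permCongr ρ) ↔
      IsShuffle3 n1 n2 n3 ρ := by
  have he : StrictMono (finCongr (Nat.add_assoc n1 n2 n3)) := fun _ _ h => h
  simp only [IsShuffle3', ← finCongr_add_assoc_castAdd_castAdd,
    ← finCongr_add_assoc_castAdd_natAdd, ← finCongr_add_assoc_natAdd, permCongr_apply,
    symm_apply_apply]
  exact and_congr he.strictMono_comp_iff (and_congr he.strictMono_comp_iff he.strictMono_comp_iff)

end TripleShuffles

section ShuffleProduct

variable (K : MvPolynomial (Fin 2) k)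

lemma rename_kernelAt {n N : ℕ} (φ : Fin n → Fin N) (i j : Fin n) :
    rename φ (kernelAt K i j) = kernelAt K (φ i) (φ j) := by
  simp only [kernelAt, ← AlgHom.comp_apply, comp_aeval]
  congr 2
  ext b
  fin_cases b <;> simp

noncomputable def shufTerm {m n : ℕ} (f : MvPolynomial (Fin m) k) (g : MvPolynomial (Fin n) k) :
    MvPolynomial (Fin (m + n)) k :=
  rename (Fin.castAdd n) f * rename (Fin.natAdd m) g *
    ∏ i : Fin m, ∏ j : Fin n, kernelAt K (Fin.castAdd n i) (Fin.natAdd m j)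

variable {K} {m n : ℕ}

lemma shufMul_eq_sum_shuffles (f : MvPolynomial (Fin m) k) (g : MvPolynomial (Fin n) k) :
    shufMul K f g = ∑ σ ∈ shuffles m n, rename σ (shufTerm K f g) :=
  (sum_filter _ _).symm

lemma rename_blockPerm_shufTerm (τ : Perm (Fin m)) (τ' : Perm (Fin n))
    (f : MvPolynomial (Fin m) k) (g : MvPolynomial (Fin n) k) :
    rename (blockPerm τ τ') (shufTerm K f g) = shufTerm K (rename τ f) (rename τ' g) := by
  simp only [shufTerm, map_mul, map_prod, rename_rename, rename_kernelAt, blockPerm_comp_castAdd,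
    blockPerm_comp_natAdd, blockPerm_castAdd, blockPerm_natAdd]
  congr 1
  rw [Equiv.prod_comp τ fun i => ∏ j, kernelAt K (Fin.castAdd n i) (Fin.natAdd m (τ' j))]
  exact prod_congr rfl fun i _ => Equiv.prod_comp τ' fun j => kernelAt K _ (Fin.natAdd m j)

lemma shufTerm_sum_left {ι : Type*} (s : Finset ι) (f : ι → MvPolynomial (Fin m) k)
    (g : MvPolynomial (Fin n) k) :
    shufTerm K (∑ i ∈ s, f i) g = ∑ i ∈ s, shufTerm K (f i) g := by
  simp only [shufTerm, map_sum, sum_mul]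

lemma shufTerm_sum_right {ι : Type*} (s : Finset ι) (f : MvPolynomial (Fin m) k)
    (g : ι → MvPolynomial (Fin n) k) :
    shufTerm K f (∑ i ∈ s, g i) = ∑ i ∈ s, shufTerm K f (g i) := by
  simp only [shufTerm, map_sum, mul_sum, sum_mul]

lemma shufMul_sum_rename_left (s : Finset (Perm (Fin m)))
    (f : MvPolynomial (Fin m) k) (g : MvPolynomial (Fin n) k) :
    shufMul K (∑ τ ∈ s, rename τ f) g =
      ∑ σ ∈ shuffles m n, ∑ τ ∈ s,
        rename ⇑(σ * blockPerm τ (1 : Perm (Fin n))) (shufTerm K f g) := by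
  rw [shufMul_eq_sum_shuffles]
  refine sum_congr rfl fun σ _ => ?_
  rw [shufTerm_sum_left, map_sum]
  refine sum_congr rfl fun τ _ => ?_
  rw [Perm.coe_mul, ← rename_rename, rename_blockPerm_shufTerm, Perm.coe_one, rename_id_apply]

lemma shufMul_sum_rename_right (s : Finset (Perm (Fin n)))
    (f : MvPolynomial (Fin m) k) (g : MvPolynomial (Fin n) k) :
    shufMul K f (∑ τ ∈ s, rename τ g) =
      ∑ σ ∈ shuffles m n, ∑ τ ∈ s,
        rename ⇑(σ * blockPerm (1 : Perm (Fin m)) τ) (shufTerm K f g) := by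
  rw [shufMul_eq_sum_shuffles]
  refine sum_congr rfl fun σ _ => ?_
  rw [shufTerm_sum_right, map_sum]
  refine sum_congr rfl fun τ _ => ?_
  rw [Perm.coe_mul, ← rename_rename, rename_blockPerm_shufTerm, Perm.coe_one, rename_id_apply]

variable {n1 n2 n3 : ℕ} (f : MvPolynomial (Fin n1) k) (g : MvPolynomial (Fin n2) k)
  (h : MvPolynomial (Fin n3) k)

lemma shufMul3_eq_sum :
    shufMul3 K f g h = ∑ ρ : Perm (Fin (n1 + n2 + n3)),
      if IsShuffle3 n1 n2 n3 ρ then rename ρ (shufTerm K (shufTerm K f g) h) else 0 := by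
  refine sum_congr rfl fun ρ _ => ?_
  congr 2
  simp only [shufTerm, map_mul, map_prod, rename_rename, rename_kernelAt, Fin.prod_univ_add,
    Function.comp_def]
  ring

lemma rename_finCongr_shufTerm_shufTerm :
    rename (finCongr (Nat.add_assoc n1 n2 n3)) (shufTerm K (shufTerm K f g) h) =
      shufTerm K f (shufTerm K g h) := by
  simp only [shufTerm, map_mul, map_prod, rename_rename, rename_kernelAt, Fin.prod_univ_add,
    prod_mul_distrib, Function.comp_def, finCongr_add_assoc_castAdd_castAdd,
    finCongr_add_assoc_castAdd_natAdd, finCongr_add_assoc_natAdd]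
  ring

theorem shufMul_shufMul_left_eq_shufMul3 : shufMul K (shufMul K f g) h = shufMul3 K f g h := by
  rw [shufMul_eq_sum_shuffles f g, shufMul_sum_rename_left, shufMul3_eq_sum,
    sum_shuffles_sum_shuffles_blockPerm_left fun ρ => rename ρ (shufTerm K (shufTerm K f g) h)]

theorem shufMul_shufMul_right_eq_rename_shufMul3 :
    shufMul K f (shufMul K g h) =
      rename (finCongr (Nat.add_assoc n1 n2 n3)) (shufMul3 K f g h) := by
  set e := finCongr (Nat.add_assoc n1 n2 n3)
  rw [shufMul_eq_sum_shuffles g h, shufMul_sum_rename_right,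
    sum_shuffles_sum_shuffles_blockPerm_right fun ρ => rename ρ (shufTerm K f (shufTerm K g h)),
    shufMul3_eq_sum, map_sum]
  refine (Fintype.sum_equiv e.permCongr _ _ fun ρ => ?_).symm
  have hcomm : ⇑e ∘ ⇑ρ = ⇑(e.permCongr ρ) ∘ ⇑e := funext fun x => by simp [permCongr_apply]
  rw [← isShuffle3'_permCongr_iff, apply_ite (rename e), map_zero, rename_rename, hcomm,
    ← rename_rename, rename_finCongr_shufTerm_shufTerm]

end ShuffleProduct

theorem shuffle_product_assoc_general
    (K : MvPolynomial (Fin 2) k) (n1 n2 n3 : ℕ)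
    (f : MvPolynomial (Fin n1) k)
    (g : MvPolynomial (Fin n2) k)
    (h : MvPolynomial (Fin n3) k) :
    rename (⇑(finCongr (Nat.add_assoc n1 n2 n3))) (shufMul K (shufMul K f g) h) =
      shufMul K f (shufMul K g h) ∧
    shufMul K (shufMul K f g) h = shufMul3 K f g h := by
  rw [shufMul_shufMul_left_eq_shufMul3, shufMul_shufMul_right_eq_rename_shufMul3]
  exact ⟨rfl, rfl⟩

/-- the shuffle product with a two-variable kernel `K` is associative on
symmetric polynomials: `(f * g) * h = f * (g * h)` (after the canonical re-indexing of
variables along `(n1+n2)+n3 = n1+(n2+n3)`), both sides being equal to the single sum over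
`(n1,n2,n3)`-shuffles of `σ·(f·g·h·Π K·Π K·Π K)`. -/
theorem shuffle_product_assoc
    (K : MvPolynomial (Fin 2) k) (n1 n2 n3 : ℕ)
    (f : MvPolynomial (Fin n1) k) (hf : ∀ τ : Equiv.Perm (Fin n1), rename (⇑τ) f = f)
    (g : MvPolynomial (Fin n2) k) (hg : ∀ τ : Equiv.Perm (Fin n2), rename (⇑τ) g = g)
    (h : MvPolynomial (Fin n3) k) (hh : ∀ τ : Equiv.Perm (Fin n3), rename (⇑τ) h = h) :
    rename (⇑(finCongr (Nat.add_assoc n1 n2 n3))) (shufMul K (shufMul K f g) h) =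
      shufMul K f (shufMul K g h) ∧
    shufMul K (shufMul K f g) h = shufMul3 K f g h :=
  shuffle_product_assoc_general K n1 n2 n3 f g h
end

section
/- Let k be an integral domain of characteristic zero (or any commutative ring where the relevant divisions make sense in the fraction field) and let f ∈ k[s_1, …, s_n]. Then the full Weyl symmetrization Σ_{w ∈ S_n} w · ( f / Π_{1 ≤ i < j ≤ n} (s_i − s_j) ), computed in the fraction field, is in fact a polynomial, and moreover a symmetric polynomial in s_1, …, s_n. -/
/-!
The alternant `A f = ∑ w, sign w • w f` is killed by the substitution `s_j ↦ s_i`, since its terms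
cancel in pairs `w`, `(i j) * w`. The kernel of that substitution is the ideal generated by
`s_i - s_j`, which is therefore prime; these primes are pairwise non-associate, so the Vandermonde
product `Δ` divides `A f`. As `w Δ = sign w • Δ`, the symmetrization equals `A f / Δ`, and the
quotient is symmetric because `A f` and `Δ` are both alternating.
-/

open Equiv MvPolynomial

open scoped Classical

variable {k : Type*} [CommRing k] [IsDomain k]

/-- The field homomorphism between fraction fields of polynomial rings induced by an
injective renaming of variables. -/
noncomputable def fracMap {σ τ : Type*} (e : σ → τ) (he : Function.Injective e) :
    FractionRing (MvPolynomial σ k) →+* FractionRing (MvPolynomial τ k) :=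
  IsFractionRing.lift
    (g := (algebraMap (MvPolynomial τ k) (FractionRing (MvPolynomial τ k))).comp
      (rename e : MvPolynomial σ k →ₐ[k] MvPolynomial τ k).toRingHom)
    (by
      exact (IsFractionRing.injective (MvPolynomial τ k)
        (FractionRing (MvPolynomial τ k))).comp (rename_injective e he))

open Function

namespace Finset

theorem prod_primes_dvd_of_pairwise_not_associated {M₀ ι : Type*} [CommMonoidWithZero M₀]
    [IsCancelMulZero M₀] {s : Finset ι} {F : ι → M₀} {n : M₀} (hprime : ∀ i ∈ s, Prime (F i))
    (hassoc : (s : Set ι).Pairwise fun i j => ¬Associated (F i) (F j))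
    (hdvd : ∀ i ∈ s, F i ∣ n) : ∏ i ∈ s, F i ∣ n := by
  classical
  refine Multiset.prod_primes_dvd n (by simpa using hprime) (by simpa using hdvd) fun a => ?_
  rw [Multiset.countP_map, ← Finset.filter_val, Finset.card_val, Finset.card_le_one]
  intro i hi j hj
  rw [Finset.mem_filter] at hi hj
  by_contra hij
  exact hassoc hi.1 hj.1 hij (hi.2.symm.trans hj.2)

end Finset

namespace MvPolynomial

variable {R : Type*} [CommRing R]

section Alternant

variable {σ : Type*} [DecidableEq σ]

theorem X_sub_X_dvd_sub_rename_update (i j : σ) (p : MvPolynomial σ R) :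
    X i - X j ∣ p - rename (update id j i) p := by
  let π := Ideal.Quotient.mkₐ R (Ideal.span {(X i - X j : MvPolynomial σ R)})
  have hπ : π.comp (rename (update id j i)) = π := by
    ext t
    rcases eq_or_ne t j with rfl | ht
    · simpa only [π, AlgHom.comp_apply, rename_X, update_self, Ideal.Quotient.mkₐ_eq_mk,
        Ideal.Quotient.eq, Ideal.mem_span_singleton] using dvd_rfl
    · simp [ht]
  rw [← Ideal.mem_span_singleton, ← Ideal.Quotient.eq]
  exact (congr($hπ p)).symm

theorem X_sub_X_dvd_iff_rename_update_eq_zero {i j : σ} (hij : i ≠ j) {p : MvPolynomial σ R} :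
    X i - X j ∣ p ↔ rename (update id j i) p = 0 := by
  constructor
  · rintro ⟨q, rfl⟩
    simp [update_of_ne hij]
  · intro h
    simpa [h] using X_sub_X_dvd_sub_rename_update i j p

theorem prime_X_sub_X [IsDomain R] {i j : σ} (hij : i ≠ j) :
    Prime (X i - X j : MvPolynomial σ R) := by
  have hspan : Ideal.span {X i - X j} = RingHom.ker (rename (R := R) (update id j i)) := by
    ext p
    rw [Ideal.mem_span_singleton, RingHom.mem_ker, X_sub_X_dvd_iff_rename_update_eq_zero hij]
  exact (Ideal.span_singleton_prime (sub_ne_zero.2 (X_injective.ne hij))).1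
    (hspan ▸ RingHom.ker_isPrime _)

theorem eq_and_eq_or_eq_and_eq_of_X_sub_X_dvd [Nontrivial R] {i j c d : σ} (hij : i ≠ j)
    (hcd : c ≠ d) (h : (X i - X j : MvPolynomial σ R) ∣ X c - X d) :
    c = i ∧ d = j ∨ c = j ∧ d = i := by
  rw [X_sub_X_dvd_iff_rename_update_eq_zero hij, map_sub, rename_X, rename_X, sub_eq_zero,
    X_inj, update_apply, update_apply] at h
  grind

variable [Fintype σ]

noncomputable def antisymmetrization (f : MvPolynomial σ R) : MvPolynomial σ R :=
  ∑ w : Perm σ, Perm.sign w • rename w f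

theorem rename_antisymmetrization (v : Perm σ) (f : MvPolynomial σ R) :
    rename v (antisymmetrization f) = Perm.sign v • antisymmetrization f := by
  simp only [antisymmetrization, map_sum, Finset.smul_sum, Units.smul_def, map_zsmul,
    rename_rename]
  refine Fintype.sum_equiv (Equiv.mulLeft v) _ _ fun w => ?_
  simp only [Equiv.coe_mulLeft, Perm.coe_mul, map_mul, smul_smul, ← mul_assoc, ← Units.val_mul,
    Int.units_mul_self, one_mul]

theorem rename_update_antisymmetrization {i j : σ} (hij : i ≠ j) (f : MvPolynomial σ R) :
    rename (update id j i) (antisymmetrization f) = 0 := by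
  have hswap : update id j i ∘ swap i j = update id j i := by
    funext t
    simp only [comp_apply, swap_apply_def, update_apply, id]
    grind
  simp only [antisymmetrization, map_sum, Units.smul_def, map_zsmul, rename_rename]
  refine Finset.sum_ninvolution (swap i j * ·) (fun w => ?_) (fun w _ h => ?_)
    (fun _ => Finset.mem_univ _) (fun w => swap_mul_self_mul i j w)
  · rw [Perm.coe_mul, ← comp_assoc, hswap, Perm.sign_mul, Perm.sign_swap hij]
    simp
  · exact hij (swap_eq_one_iff.1 (mul_eq_right.1 h))

theorem X_sub_X_dvd_antisymmetrization {i j : σ} (hij : i ≠ j) (f : MvPolynomial σ R) :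
    X i - X j ∣ antisymmetrization f :=
  (X_sub_X_dvd_iff_rename_update_eq_zero hij).2 (rename_update_antisymmetrization hij f)

end Alternant

variable {n : ℕ}

noncomputable def vandermondeProd (n : ℕ) (R : Type*) [CommRing R] : MvPolynomial (Fin n) R :=
  ∏ p ∈ Finset.univ.filter (fun p : Fin n × Fin n => p.1 < p.2), (X p.1 - X p.2)

theorem vandermondeProd_eq_neg_one_pow_mul_det :
    vandermondeProd n R = (-1) ^ (Finset.univ.filter (fun p : Fin n × Fin n => p.1 < p.2)).card *
      (Matrix.vandermonde (X : Fin n → MvPolynomial (Fin n) R)).det := by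
  rw [Matrix.det_vandermonde, ← Finset.prod_finset_product'
    (Finset.univ.filter (fun p : Fin n × Fin n => p.1 < p.2)) _ _ (by simp), ← Finset.prod_neg,
    vandermondeProd]
  simp

theorem rename_vandermondeProd (w : Perm (Fin n)) :
    rename w (vandermondeProd n R) = Perm.sign w • vandermondeProd n R := by
  have hdet : rename w (Matrix.vandermonde (X : Fin n → MvPolynomial (Fin n) R)).det =
      Perm.sign w • (Matrix.vandermonde (X : Fin n → MvPolynomial (Fin n) R)).det := by
    rw [AlgHom.map_det, AlgHom.mapMatrix_apply, Units.smul_def, zsmul_eq_mul, ← Matrix.det_permute]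
    congr 1
    ext i j
    simp [Matrix.vandermonde]
  rw [vandermondeProd_eq_neg_one_pow_mul_det, map_mul, hdet, mul_smul_comm]
  simp

theorem vandermondeProd_ne_zero [IsDomain R] : vandermondeProd n R ≠ 0 :=
  Finset.prod_ne_zero_iff.2 fun _ hp =>
    sub_ne_zero.2 (X_injective.ne (Finset.mem_filter.1 hp).2.ne)

theorem vandermondeProd_dvd_antisymmetrization [IsDomain R] (f : MvPolynomial (Fin n) R) :
    vandermondeProd n R ∣ antisymmetrization f := by
  refine Finset.prod_primes_dvd_of_pairwise_not_associated
    (fun p hp => prime_X_sub_X (Finset.mem_filter.1 hp).2.ne) ?_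
    (fun p hp => X_sub_X_dvd_antisymmetrization (Finset.mem_filter.1 hp).2.ne f)
  rintro ⟨a, b⟩ hab ⟨c, d⟩ hcd hne hassoc
  simp only [Finset.coe_filter, Set.mem_ofPred_eq, Finset.mem_univ, true_and] at hab hcd
  rcases eq_and_eq_or_eq_and_eq_of_X_sub_X_dvd hab.ne hcd.ne hassoc.dvd with
    ⟨rfl, rfl⟩ | ⟨rfl, rfl⟩
  · exact hne rfl
  · exact lt_asymm hab hcd

theorem isSymmetric_of_vandermondeProd_mul_eq_antisymmetrization [IsDomain R]
    {f g : MvPolynomial (Fin n) R} (h : vandermondeProd n R * g = antisymmetrization f) :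
    g.IsSymmetric := by
  intro w
  have hw := rename_antisymmetrization w f
  rw [← h, map_mul, rename_vandermondeProd, smul_mul_assoc] at hw
  exact mul_left_cancel₀ vandermondeProd_ne_zero (MulAction.injective (Perm.sign w) hw)

end MvPolynomial

theorem fracMap_algebraMap {σ τ : Type*} (e : σ → τ) (he : Injective e) (a : MvPolynomial σ k) :
    fracMap e he (algebraMap _ _ a) = algebraMap _ (FractionRing (MvPolynomial τ k)) (rename e a) :=
  IsFractionRing.lift_algebraMap _ a

theorem sum_fracMap_div_vandermondeProd {n : ℕ} (f : MvPolynomial (Fin n) k) :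
    ∑ w : Perm (Fin n), fracMap w w.injective
        (algebraMap _ (FractionRing (MvPolynomial (Fin n) k)) f /
          algebraMap _ _ (vandermondeProd n k)) =
      algebraMap _ _ (antisymmetrization f) / algebraMap _ _ (vandermondeProd n k) := by
  rw [antisymmetrization, map_sum, Finset.sum_div]
  refine Finset.sum_congr rfl fun w _ => ?_
  rw [map_div₀, fracMap_algebraMap, fracMap_algebraMap, rename_vandermondeProd]
  rcases Int.units_eq_one_or (Perm.sign w) with h | h <;> simp [h, neg_div, div_neg]

theorem weyl_symmetrization_is_symmetric_polynomial_general
    (n : ℕ) (f : MvPolynomial (Fin n) k) :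
    ∃ g : MvPolynomial (Fin n) k,
      (∀ w : Equiv.Perm (Fin n), rename (⇑w) g = g) ∧
      algebraMap (MvPolynomial (Fin n) k) (FractionRing (MvPolynomial (Fin n) k)) g =
        ∑ w : Equiv.Perm (Fin n),
          fracMap (⇑w) w.injective
            (algebraMap (MvPolynomial (Fin n) k) (FractionRing (MvPolynomial (Fin n) k)) f /
              algebraMap (MvPolynomial (Fin n) k) (FractionRing (MvPolynomial (Fin n) k))
                (∏ p ∈ Finset.univ.filter (fun p : Fin n × Fin n => p.1 < p.2),
                  (X p.1 - X p.2))) := by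
  obtain ⟨g, hg⟩ := vandermondeProd_dvd_antisymmetrization f
  have hΔ : algebraMap _ (FractionRing (MvPolynomial (Fin n) k)) (vandermondeProd n k) ≠ 0 :=
    (map_ne_zero_iff _ (IsFractionRing.injective _ _)).2 vandermondeProd_ne_zero
  refine ⟨g, isSymmetric_of_vandermondeProd_mul_eq_antisymmetrization hg.symm, ?_⟩
  rw [← vandermondeProd, sum_fracMap_div_vandermondeProd, hg, map_mul, mul_div_cancel_left₀ _ hΔ]

/-- the full Weyl symmetrization `Σ_{w ∈ S_n} w·( f / Π_{i<j}(s_i − s_j) )`,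
computed in the fraction field, is (the image of) a symmetric polynomial in `s_1,…,s_n`. -/
theorem weyl_symmetrization_is_symmetric_polynomial
    [CharZero k] (n : ℕ) (f : MvPolynomial (Fin n) k) :
    ∃ g : MvPolynomial (Fin n) k,
      (∀ w : Equiv.Perm (Fin n), rename (⇑w) g = g) ∧
      algebraMap (MvPolynomial (Fin n) k) (FractionRing (MvPolynomial (Fin n) k)) g =
        ∑ w : Equiv.Perm (Fin n),
          fracMap (⇑w) w.injective
            (algebraMap (MvPolynomial (Fin n) k) (FractionRing (MvPolynomial (Fin n) k)) f /
              algebraMap (MvPolynomial (Fin n) k) (FractionRing (MvPolynomial (Fin n) k))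
                (∏ p ∈ Finset.univ.filter (fun p : Fin n × Fin n => p.1 < p.2),
                  (X p.1 - X p.2))) :=
  weyl_symmetrization_is_symmetric_polynomial_general n f
end
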